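/- Let m ≥ 2 be an integer and let A be a nonempty subset of the group of units Z_m^*. Then |A|^3 ≤ |A·A| · |A|^2 · |A+A| / m + |A| · ( m · |A·A| · |A+A| )^{1/2} · Σ_{d | m, d < m} d^{1/2}, where the sum runs over positive divisors d of m with d < m. -/

import Mathlib

open Pointwise Finset Complex

local notation "ψ" => ZMod.stdAddChar

section Aux

variable {m : ℕ} [NeZero m]

lemma psi_norm (a : ZMod m) : ‖ψ a‖ = 1 := by
  rw [ZMod.stdAddChar_apply, Circle.norm_coe]

lemma psi_conj (a : ZMod m) : (starRingEnd ℂ) (ψ a) = ψ (-a) := by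
  have h0 : ψ a ≠ 0 := by
    intro h; simpa [h] using psi_norm a
  apply mul_left_cancel₀ h0
  rw [Complex.mul_conj, ← AddChar.map_add_eq_mul, add_neg_cancel, AddChar.map_zero_eq_one]
  rw [Complex.normSq_eq_norm_sq, psi_norm]
  norm_num

lemma orth (b : ZMod m) : ∑ t : ZMod m, ψ (t * b) = if b = 0 then (m : ℂ) else 0 := by
  have := AddChar.sum_mulShift b (ZMod.isPrimitive_stdAddChar m)
  rw [ZMod.card] at this
  simpa [apply_ite (Nat.cast : ℕ → ℂ)] using this

lemma orth' (b : ZMod m) :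
    (m : ℂ)⁻¹ * ∑ t : ZMod m, ψ (t * b) = if b = 0 then 1 else 0 := by
  have hm : (m : ℂ) ≠ 0 := Nat.cast_ne_zero.mpr (NeZero.ne m)
  rw [orth]
  split_ifs <;> field_simp <;> simp

lemma parseval (T : Finset (ZMod m)) :
    ∑ t : ZMod m, ‖∑ x ∈ T, ψ (t * x)‖ ^ 2 = (m : ℝ) * T.card := by
  have key : ∑ t : ZMod m, ((‖∑ x ∈ T, ψ (t * x)‖ : ℂ) ^ 2)
      = ((m : ℝ) * T.card : ℂ) := by
    have step1 : ∀ t : ZMod m, ((‖∑ x ∈ T, ψ (t * x)‖ : ℂ) ^ 2)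
        = ∑ x ∈ T, ∑ y ∈ T, ψ (t * (x - y)) := by
      intro t
      have : ((‖∑ x ∈ T, ψ (t * x)‖ : ℂ) ^ 2)
          = (∑ x ∈ T, ψ (t * x)) * (starRingEnd ℂ) (∑ x ∈ T, ψ (t * x)) := by
        rw [Complex.mul_conj, Complex.normSq_eq_norm_sq]
        push_cast
        ring
      rw [this, map_sum]
      rw [Finset.sum_mul_sum]
      refine Finset.sum_congr rfl fun x _ => Finset.sum_congr rfl fun y _ => ?_
      rw [psi_conj, ← AddChar.map_add_eq_mul]
      congr 1
      ring
    calc ∑ t : ZMod m, ((‖∑ x ∈ T, ψ (t * x)‖ : ℂ) ^ 2)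
        = ∑ t : ZMod m, ∑ x ∈ T, ∑ y ∈ T, ψ (t * (x - y)) :=
          Finset.sum_congr rfl fun t _ => step1 t
      _ = ∑ x ∈ T, ∑ y ∈ T, ∑ t : ZMod m, ψ (t * (x - y)) := by
          rw [Finset.sum_comm]
          refine Finset.sum_congr rfl fun x _ => ?_
          rw [Finset.sum_comm]
      _ = ∑ x ∈ T, ∑ y ∈ T, if x - y = 0 then (m : ℂ) else 0 :=
          Finset.sum_congr rfl fun x _ => Finset.sum_congr rfl fun y _ => orth _
      _ = ∑ x ∈ T, (m : ℂ) := by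
          refine Finset.sum_congr rfl fun x hx => ?_
          simp_rw [sub_eq_zero]
          rw [Finset.sum_ite_eq T x (fun _ => (m : ℂ)), if_pos hx]
      _ = ((m : ℝ) * T.card : ℂ) := by
          rw [Finset.sum_const]
          push_cast
          ring
  exact_mod_cast key

lemma parseval_neg (T : Finset (ZMod m)) :
    ∑ t : ZMod m, ‖∑ x ∈ T, ψ (-(t * x))‖ ^ 2 = (m : ℝ) * T.card := by
  rw [← parseval T]
  exact Fintype.sum_equiv (Equiv.neg (ZMod m)) _ _ (fun t => by
    refine congrArg (fun z => ‖z‖ ^ 2) (Finset.sum_congr rfl fun x _ => ?_)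
    congr 1
    simp [Equiv.neg_apply])

lemma ker_card_le {t : ZMod m} (ht : t ≠ 0) :
    (Finset.univ.filter fun x : ZMod m => t * x = 0).card ≤ Nat.gcd t.val m := by
  set g := Nat.gcd t.val m with hg
  have htv : t.val ≠ 0 := fun h => ht (ZMod.val_injective m (by simp [h]))
  have hg0 : 0 < g := Nat.gcd_pos_of_pos_left _ (Nat.pos_of_ne_zero htv)
  have hgdvd : g ∣ m := Nat.gcd_dvd_right _ _
  set k := m / g with hk
  have hkg : k * g = m := Nat.div_mul_cancel hgdvd
  have hk0 : 0 < k := by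
    rcases Nat.eq_zero_or_pos k with h | h
    · exfalso; have := hkg; rw [h, zero_mul] at this; exact (NeZero.ne m) this.symm
    · exact h
  have hdvd : ∀ x : ZMod m, t * x = 0 → k ∣ x.val := by
    intro x hx
    have hmd : m ∣ t.val * x.val := by
      rw [← ZMod.natCast_eq_zero_iff]
      push_cast
      rw [ZMod.natCast_zmod_val, ZMod.natCast_zmod_val, hx]
    have h1 : k ∣ (t.val / g) * x.val := by
      have h2 : g * k ∣ g * ((t.val / g) * x.val) := by
        rw [← mul_assoc, Nat.mul_div_cancel' (Nat.gcd_dvd_left t.val m)]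
        rw [mul_comm g k, hkg]
        exact hmd
      exact (Nat.mul_dvd_mul_iff_left hg0).mp h2
    have hco : Nat.Coprime k (t.val / g) :=
      (Nat.coprime_div_gcd_div_gcd hg0).symm
    exact hco.dvd_of_dvd_mul_left h1
  have hmain : (Finset.univ.filter fun x : ZMod m => t * x = 0).card
      ≤ (Finset.range g).card := by
    apply Finset.card_le_card_of_injOn (fun x => x.val / k)
    · intro x hx
      simp only [Finset.mem_coe, Finset.mem_filter, Finset.mem_univ, true_and] at hx
      simp only [Finset.mem_coe, Finset.mem_range]
      have hlt : x.val < k * g := by rw [hkg]; exact ZMod.val_lt x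
      exact Nat.div_lt_of_lt_mul (by omega)
    · intro x hx y hy hxy
      simp only [Finset.mem_coe, Finset.mem_filter, Finset.mem_univ, true_and] at hx hy
      have hdx := hdvd x hx
      have hdy := hdvd y hy
      apply ZMod.val_injective
      simp only at hxy
      rw [← Nat.div_mul_cancel hdx, ← Nat.div_mul_cancel hdy, hxy]
  simpa [Finset.card_range] using hmain

lemma fiber_card_le {t : ZMod m} (ht : t ≠ 0) (s : ZMod m) (A : Finset (ZMod m))
    (hU : ∀ a ∈ A, IsUnit a) :
    (A.filter fun a => t * a⁻¹ = s).card ≤ Nat.gcd t.val m := by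
  rcases (A.filter fun a => t * a⁻¹ = s).eq_empty_or_nonempty with h | ⟨a₀, ha₀⟩
  · simp [h]
  · refine le_trans (Finset.card_le_card_of_injOn (fun a => a⁻¹ - a₀⁻¹) ?_ ?_)
      (ker_card_le ht)
    · intro a ha
      simp only [Finset.mem_coe, Finset.mem_filter] at ha ha₀
      simp only [Finset.mem_coe, Finset.mem_filter, Finset.mem_univ, true_and]
      rw [mul_sub, ha.2, ha₀.2, sub_self]
    · intro a ha b hb hab
      simp only [Finset.mem_coe, Finset.mem_filter] at ha hb
      have hinv : a⁻¹ = b⁻¹ := sub_left_inj.mp hab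
      have hua := hU a ha.1
      have hub := hU b hb.1
      calc a = (b⁻¹ * b) * a := by rw [ZMod.inv_mul_of_unit b hub, one_mul]
        _ = (a⁻¹ * a) * b := by rw [← hinv]; ring
        _ = b := by rw [ZMod.inv_mul_of_unit a hua, one_mul]

end Aux

section Main

variable {m : ℕ} [NeZero m]

def Tset (A : Finset (ZMod m)) : Finset ((ZMod m × ZMod m) × ZMod m) :=
  ((A ×ˢ (A * A)) ×ˢ (A + A)).filter fun p => p.2 - p.1.2 * p.1.1⁻¹ ∈ A

noncomputable def S1 (A : Finset (ZMod m)) (t : ZMod m) : ℂ :=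
  ∑ a ∈ A, ∑ u ∈ A * A, ψ (-(t * (u * a⁻¹)))

noncomputable def S2 (A : Finset (ZMod m)) (t : ZMod m) : ℂ :=
  ∑ v ∈ A + A, ψ (t * v)

noncomputable def S3 (A : Finset (ZMod m)) (t : ZMod m) : ℂ :=
  ∑ x ∈ A, ψ (-(t * x))

lemma count_lower (A : Finset (ZMod m)) (hU : ∀ a ∈ A, IsUnit a) :
    A.card ^ 3 ≤ (Tset A).card := by
  have hcard : (A ×ˢ A ×ˢ A).card = A.card ^ 3 := by
    simp [Finset.card_product]; ring
  rw [← hcard]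
  apply Finset.card_le_card_of_injOn
    (fun p => ((p.1, p.1 * p.2.1), p.2.1 + p.2.2))
  · rintro ⟨a, b, c⟩ hp
    simp only [Finset.mem_coe, Finset.mem_product] at hp
    obtain ⟨ha, hb, hc⟩ := hp
    have h1 : a * a⁻¹ = 1 := ZMod.mul_inv_of_unit a (hU a ha)
    simp only [Finset.mem_coe, Tset, Finset.mem_filter, Finset.mem_product]
    refine ⟨⟨⟨ha, Finset.mul_mem_mul ha hb⟩, Finset.add_mem_add hb hc⟩, ?_⟩
    have : a * b * a⁻¹ = b := by
      calc a * b * a⁻¹ = (a * a⁻¹) * b := by ring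
        _ = b := by rw [h1, one_mul]
    rw [this, add_sub_cancel_left]
    exact hc
  · rintro ⟨a, b, c⟩ hp ⟨a', b', c'⟩ hq heq
    simp only [Finset.mem_coe, Finset.mem_product] at hp hq
    obtain ⟨ha, hb, hc⟩ := hp
    obtain ⟨ha', hb', hc'⟩ := hq
    simp only [Prod.mk.injEq] at heq
    obtain ⟨⟨h1, h2⟩, h3⟩ := heq
    subst h1
    have hbb : b = b' := by
      calc b = (a⁻¹ * a) * b := by rw [ZMod.inv_mul_of_unit a (hU a ha), one_mul]
        _ = a⁻¹ * (a * b) := by ring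
        _ = a⁻¹ * (a * b') := by rw [h2]
        _ = (a⁻¹ * a) * b' := by ring
        _ = b' := by rw [ZMod.inv_mul_of_unit a (hU a ha), one_mul]
    subst hbb
    have hcc : c = c' := by
      have := h3
      exact add_left_cancel this
    simp [hcc]

lemma fourierExpand (A : Finset (ZMod m)) :
    ((Tset A).card : ℂ) = (m : ℂ)⁻¹ * ∑ t : ZMod m, S1 A t * S2 A t * S3 A t := by
  have expand : ∀ t : ZMod m, S1 A t * S2 A t * S3 A t
      = ∑ a ∈ A, ∑ u ∈ A * A, ∑ v ∈ A + A, ∑ x ∈ A, ψ (t * (v - u * a⁻¹ - x)) := by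
    intro t
    rw [S1, S2, S3, mul_assoc, Finset.sum_mul]
    refine Finset.sum_congr rfl fun a _ => ?_
    rw [Finset.sum_mul]
    refine Finset.sum_congr rfl fun u _ => ?_
    rw [Finset.sum_mul_sum, Finset.mul_sum]
    refine Finset.sum_congr rfl fun v _ => ?_
    rw [Finset.mul_sum]
    refine Finset.sum_congr rfl fun x _ => ?_
    rw [← AddChar.map_add_eq_mul, ← AddChar.map_add_eq_mul]
    congr 1
    ring
  have swap : ∑ t : ZMod m, ∑ a ∈ A, ∑ u ∈ A * A, ∑ v ∈ A + A, ∑ x ∈ A,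
        ψ (t * (v - u * a⁻¹ - x))
      = ∑ a ∈ A, ∑ u ∈ A * A, ∑ v ∈ A + A, ∑ x ∈ A, ∑ t : ZMod m,
        ψ (t * (v - u * a⁻¹ - x)) := by
    rw [Finset.sum_comm]
    refine Finset.sum_congr rfl fun a _ => ?_
    rw [Finset.sum_comm]
    refine Finset.sum_congr rfl fun u _ => ?_
    rw [Finset.sum_comm]
    refine Finset.sum_congr rfl fun v _ => ?_
    rw [Finset.sum_comm]
  calc ((Tset A).card : ℂ)
      = ∑ a ∈ A, ∑ u ∈ A * A, ∑ v ∈ A + A,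
          (if v - u * a⁻¹ ∈ A then (1 : ℂ) else 0) := by
        rw [Tset, Finset.card_filter]
        push_cast
        rw [Finset.sum_product, Finset.sum_product]
    _ = ∑ a ∈ A, ∑ u ∈ A * A, ∑ v ∈ A + A, ∑ x ∈ A,
          (m : ℂ)⁻¹ * ∑ t : ZMod m, ψ (t * (v - u * a⁻¹ - x)) := by
        refine Finset.sum_congr rfl fun a _ => Finset.sum_congr rfl fun u _ =>
          Finset.sum_congr rfl fun v _ => ?_
        calc (if v - u * a⁻¹ ∈ A then (1 : ℂ) else 0)
            = ∑ x ∈ A, (if v - u * a⁻¹ = x then (1 : ℂ) else 0) :=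
              (Finset.sum_ite_eq A (v - u * a⁻¹) (fun _ => (1 : ℂ))).symm
          _ = ∑ x ∈ A, (m : ℂ)⁻¹ * ∑ t : ZMod m, ψ (t * (v - u * a⁻¹ - x)) := by
              refine Finset.sum_congr rfl fun x _ => ?_
              rw [orth' (v - u * a⁻¹ - x)]
              simp [sub_eq_zero]
    _ = (m : ℂ)⁻¹ * ∑ a ∈ A, ∑ u ∈ A * A, ∑ v ∈ A + A, ∑ x ∈ A,
          ∑ t : ZMod m, ψ (t * (v - u * a⁻¹ - x)) := by
        simp_rw [Finset.mul_sum]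
    _ = (m : ℂ)⁻¹ * ∑ t : ZMod m, S1 A t * S2 A t * S3 A t := by
        rw [← swap]
        congr 1
        exact (Finset.sum_congr rfl fun t _ => (expand t)).symm

end Main

section Main2

variable {m : ℕ} [NeZero m]

lemma S1_bound (A : Finset (ZMod m)) (hU : ∀ a ∈ A, IsUnit a) {t : ZMod m} (ht : t ≠ 0) :
    ‖S1 A t‖ ^ 2 ≤ (A.card : ℝ) * ((Nat.gcd t.val m : ℝ) * ((m : ℝ) * ((A * A).card : ℝ))) := by
  set F : ZMod m → ℂ := fun s => ∑ u ∈ A * A, ψ (-(s * u)) with hF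
  have hrw : S1 A t = ∑ a ∈ A, F (t * a⁻¹) := by
    refine Finset.sum_congr rfl fun a _ => Finset.sum_congr rfl fun u _ => ?_
    congr 1
    ring
  have fib : ∑ a ∈ A, ‖F (t * a⁻¹)‖ ^ 2
      ≤ (Nat.gcd t.val m : ℝ) * ∑ s : ZMod m, ‖F s‖ ^ 2 := by
    calc ∑ a ∈ A, ‖F (t * a⁻¹)‖ ^ 2
        = ∑ s ∈ A.image (fun a => t * a⁻¹),
            (A.filter fun a => t * a⁻¹ = s).card • ‖F s‖ ^ 2 :=
          Finset.sum_comp (fun s => ‖F s‖ ^ 2) (fun a => t * a⁻¹)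
      _ ≤ ∑ s ∈ A.image (fun a => t * a⁻¹), (Nat.gcd t.val m : ℝ) * ‖F s‖ ^ 2 := by
          refine Finset.sum_le_sum fun s _ => ?_
          rw [nsmul_eq_mul]
          have hc : ((A.filter fun a => t * a⁻¹ = s).card : ℝ) ≤ (Nat.gcd t.val m : ℝ) :=
            Nat.cast_le.mpr (fiber_card_le ht s A hU)
          exact mul_le_mul_of_nonneg_right hc (by positivity)
      _ ≤ ∑ s : ZMod m, (Nat.gcd t.val m : ℝ) * ‖F s‖ ^ 2 :=
          Finset.sum_le_sum_of_subset_of_nonneg (Finset.subset_univ _)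
            (fun s _ _ => by positivity)
      _ = (Nat.gcd t.val m : ℝ) * ∑ s : ZMod m, ‖F s‖ ^ 2 := by rw [Finset.mul_sum]
  have hpar : ∑ s : ZMod m, ‖F s‖ ^ 2 = (m : ℝ) * ((A * A).card : ℝ) := parseval_neg (A * A)
  calc ‖S1 A t‖ ^ 2 ≤ (∑ a ∈ A, ‖F (t * a⁻¹)‖) ^ 2 := by
        rw [hrw]
        have h := norm_sum_le A (fun a => F (t * a⁻¹))
        exact pow_le_pow_left₀ (norm_nonneg _) h 2
    _ ≤ (A.card : ℝ) * ∑ a ∈ A, ‖F (t * a⁻¹)‖ ^ 2 := sq_sum_le_card_mul_sum_sq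
    _ ≤ (A.card : ℝ) * ((Nat.gcd t.val m : ℝ) * ∑ s : ZMod m, ‖F s‖ ^ 2) := by
        have h0 : (0:ℝ) ≤ (A.card : ℝ) := by positivity
        exact mul_le_mul_of_nonneg_left fib h0
    _ = (A.card : ℝ) * ((Nat.gcd t.val m : ℝ) * ((m : ℝ) * ((A * A).card : ℝ))) := by
        rw [hpar]

lemma S1_zero (A : Finset (ZMod m)) :
    S1 A 0 = ((A.card : ℂ) * ((A * A).card : ℂ)) := by
  simp [S1, AddChar.map_zero_eq_one]

lemma S2_zero (A : Finset (ZMod m)) : S2 A 0 = (((A + A).card : ℂ)) := by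
  simp [S2, AddChar.map_zero_eq_one]

lemma S3_zero (A : Finset (ZMod m)) : S3 A 0 = ((A.card : ℂ)) := by
  simp [S3, AddChar.map_zero_eq_one]

end Main2

theorem key_inequality_zmod (m : ℕ) (hm : 2 ≤ m) (A : Finset (ZMod m))
    (hA : A.Nonempty) (hU : ∀ a ∈ A, IsUnit a) :
    (A.card : ℝ) ^ 3 ≤
      ((A * A).card : ℝ) * (A.card : ℝ) ^ 2 * ((A + A).card : ℝ) / m +
        (A.card : ℝ) * Real.sqrt ((m : ℝ) * (A * A).card * (A + A).card) *
          ∑ d ∈ m.divisors.filter (· < m), Real.sqrt d := by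
  have hNZ : NeZero m := ⟨by omega⟩
  have hmR : (0 : ℝ) < m := by exact_mod_cast Nat.lt_of_lt_of_le (by norm_num) hm
  set D := m.divisors.filter (· < m) with hD
  set W : ZMod m → ℝ := fun t => ‖S2 A t‖ * ‖S3 A t‖ with hW
  set Z : ℝ := ∑ t : ZMod m, W t with hZ
  set C : ℝ := Real.sqrt ((A.card : ℝ) * ((m : ℝ) * ((A * A).card : ℝ))) with hC
  have hWnn : ∀ t, 0 ≤ W t := fun t => by positivity
  -- Step 1: counting lower bound
  have h1 : (A.card : ℝ) ^ 3 ≤ ((Tset A).card : ℝ) := by exact_mod_cast count_lower A hU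
  -- Step 2: Fourier + triangle inequality
  have h2 : ((Tset A).card : ℝ)
      ≤ (m : ℝ)⁻¹ * ∑ t : ZMod m, ‖S1 A t‖ * ‖S2 A t‖ * ‖S3 A t‖ := by
    have he : ((Tset A).card : ℝ) = ‖((Tset A).card : ℂ)‖ := by
      simp
    rw [he, fourierExpand A, norm_mul]
    have hni : ‖((m : ℂ))⁻¹‖ = (m : ℝ)⁻¹ := by
      rw [norm_inv]
      simp
    rw [hni]
    have : ‖∑ t : ZMod m, S1 A t * S2 A t * S3 A t‖
        ≤ ∑ t : ZMod m, ‖S1 A t‖ * ‖S2 A t‖ * ‖S3 A t‖ := by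
      refine le_trans (norm_sum_le _ _) (le_of_eq (Finset.sum_congr rfl fun t _ => ?_))
      rw [norm_mul, norm_mul]
    exact mul_le_mul_of_nonneg_left this (by positivity)
  -- Step 3: split off t = 0
  have h3 : ∑ t : ZMod m, ‖S1 A t‖ * ‖S2 A t‖ * ‖S3 A t‖
      = ‖S1 A 0‖ * ‖S2 A 0‖ * ‖S3 A 0‖
        + ∑ t ∈ Finset.univ.erase (0 : ZMod m), ‖S1 A t‖ * ‖S2 A t‖ * ‖S3 A t‖ :=
    (Finset.add_sum_erase _ _ (Finset.mem_univ 0)).symm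
  have h4 : ‖S1 A 0‖ * ‖S2 A 0‖ * ‖S3 A 0‖
      = (A.card : ℝ) * ((A * A).card : ℝ) * ((A + A).card : ℝ) * (A.card : ℝ) := by
    rw [S1_zero, S2_zero, S3_zero]
    rw [norm_mul]
    simp
  -- Step 4: pointwise bound on the error terms
  have h5 : ∀ t ∈ Finset.univ.erase (0 : ZMod m),
      ‖S1 A t‖ * ‖S2 A t‖ * ‖S3 A t‖
        ≤ C * (Real.sqrt (Nat.gcd t.val m) * W t) := by
    intro t ht'
    have ht : t ≠ 0 := (Finset.mem_erase.mp ht').1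
    have hb := S1_bound A hU ht
    have hS1 : ‖S1 A t‖ ≤ Real.sqrt (Nat.gcd t.val m) * C := by
      have h0 : ‖S1 A t‖ = Real.sqrt (‖S1 A t‖ ^ 2) := (Real.sqrt_sq (norm_nonneg _)).symm
      rw [h0, ← Real.sqrt_mul (by positivity)]
      apply Real.sqrt_le_sqrt
      calc ‖S1 A t‖ ^ 2 ≤ (A.card : ℝ) * ((Nat.gcd t.val m : ℝ) * ((m : ℝ) * ((A * A).card : ℝ))) := hb
        _ = (Nat.gcd t.val m : ℝ) * ((A.card : ℝ) * ((m : ℝ) * ((A * A).card : ℝ))) := by ring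
    calc ‖S1 A t‖ * ‖S2 A t‖ * ‖S3 A t‖ = ‖S1 A t‖ * W t := by rw [hW]; ring
      _ ≤ (Real.sqrt (Nat.gcd t.val m) * C) * W t :=
          mul_le_mul_of_nonneg_right hS1 (hWnn t)
      _ = C * (Real.sqrt (Nat.gcd t.val m) * W t) := by ring
  -- Step 5: grouping by gcd
  have hmaps : ∀ t ∈ Finset.univ.erase (0 : ZMod m), Nat.gcd t.val m ∈ D := by
    intro t ht'
    have ht : t ≠ 0 := (Finset.mem_erase.mp ht').1
    have htv : t.val ≠ 0 := fun h => ht ((ZMod.val_eq_zero t).mp h)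
    rw [hD, Finset.mem_filter, Nat.mem_divisors]
    refine ⟨⟨Nat.gcd_dvd_right _ _, NeZero.ne m⟩, ?_⟩
    calc Nat.gcd t.val m ≤ t.val := Nat.gcd_le_left _ (Nat.pos_of_ne_zero htv)
      _ < m := ZMod.val_lt t
  have h6 : ∑ t ∈ Finset.univ.erase (0 : ZMod m), Real.sqrt (Nat.gcd t.val m) * W t
      ≤ (∑ d ∈ D, Real.sqrt d) * Z := by
    rw [← Finset.sum_fiberwise_of_maps_to hmaps (fun t => Real.sqrt (Nat.gcd t.val m) * W t)]
    rw [Finset.sum_mul]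
    refine Finset.sum_le_sum fun d hd => ?_
    calc ∑ t ∈ (Finset.univ.erase (0 : ZMod m)).filter (fun t => Nat.gcd t.val m = d),
            Real.sqrt (Nat.gcd t.val m) * W t
        = ∑ t ∈ (Finset.univ.erase (0 : ZMod m)).filter (fun t => Nat.gcd t.val m = d),
            Real.sqrt d * W t := by
          refine Finset.sum_congr rfl fun t htf => ?_
          rw [(Finset.mem_filter.mp htf).2]
      _ = Real.sqrt d * ∑ t ∈ (Finset.univ.erase (0 : ZMod m)).filter
            (fun t => Nat.gcd t.val m = d), W t := by rw [Finset.mul_sum]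
      _ ≤ Real.sqrt d * Z := by
          refine mul_le_mul_of_nonneg_left ?_ (Real.sqrt_nonneg _)
          exact Finset.sum_le_sum_of_subset_of_nonneg (Finset.subset_univ _)
            (fun t _ _ => hWnn t)
  -- Step 6: Cauchy-Schwarz on Z
  have h7 : Z ≤ Real.sqrt (((m : ℝ) * ((A + A).card : ℝ)) * ((m : ℝ) * (A.card : ℝ))) := by
    have hZnn : 0 ≤ Z := Finset.sum_nonneg fun t _ => hWnn t
    have hcs : Z ^ 2 ≤ (∑ t : ZMod m, ‖S2 A t‖ ^ 2) * ∑ t : ZMod m, ‖S3 A t‖ ^ 2 :=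
      Finset.sum_mul_sq_le_sq_mul_sq _ _ _
    have hp2 : ∑ t : ZMod m, ‖S2 A t‖ ^ 2 = (m : ℝ) * ((A + A).card : ℝ) := parseval (A + A)
    have hp3 : ∑ t : ZMod m, ‖S3 A t‖ ^ 2 = (m : ℝ) * (A.card : ℝ) := parseval_neg A
    rw [hp2, hp3] at hcs
    calc Z = Real.sqrt (Z ^ 2) := (Real.sqrt_sq hZnn).symm
      _ ≤ _ := Real.sqrt_le_sqrt hcs
  -- Step 7: final algebra
  have hCZ : C * Real.sqrt (((m : ℝ) * ((A + A).card : ℝ)) * ((m : ℝ) * (A.card : ℝ)))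
      = (m : ℝ) * ((A.card : ℝ) * Real.sqrt ((m : ℝ) * ((A * A).card : ℝ) * ((A + A).card : ℝ))) := by
    rw [hC, ← Real.sqrt_mul (by positivity)]
    have e2 : (A.card : ℝ) * ((m : ℝ) * ((A * A).card : ℝ))
          * (((m : ℝ) * ((A + A).card : ℝ)) * ((m : ℝ) * (A.card : ℝ)))
        = ((m : ℝ) * (A.card : ℝ)) ^ 2 * ((m : ℝ) * ((A * A).card : ℝ) * ((A + A).card : ℝ)) := by
      ring
    rw [e2, Real.sqrt_mul (sq_nonneg _), Real.sqrt_sq (by positivity)]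
    ring
  -- error sum bound
  have herr : ∑ t ∈ Finset.univ.erase (0 : ZMod m), ‖S1 A t‖ * ‖S2 A t‖ * ‖S3 A t‖
      ≤ (m : ℝ) * ((A.card : ℝ) * Real.sqrt ((m : ℝ) * ((A * A).card : ℝ) * ((A + A).card : ℝ)))
        * ∑ d ∈ D, Real.sqrt d := by
    calc ∑ t ∈ Finset.univ.erase (0 : ZMod m), ‖S1 A t‖ * ‖S2 A t‖ * ‖S3 A t‖
        ≤ ∑ t ∈ Finset.univ.erase (0 : ZMod m), C * (Real.sqrt (Nat.gcd t.val m) * W t) :=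
          Finset.sum_le_sum h5
      _ = C * ∑ t ∈ Finset.univ.erase (0 : ZMod m), Real.sqrt (Nat.gcd t.val m) * W t := by
          rw [Finset.mul_sum]
      _ ≤ C * ((∑ d ∈ D, Real.sqrt d) * Z) :=
          mul_le_mul_of_nonneg_left h6 (Real.sqrt_nonneg _)
      _ ≤ C * ((∑ d ∈ D, Real.sqrt d)
            * Real.sqrt (((m : ℝ) * ((A + A).card : ℝ)) * ((m : ℝ) * (A.card : ℝ)))) := by
          refine mul_le_mul_of_nonneg_left ?_ (Real.sqrt_nonneg _)
          refine mul_le_mul_of_nonneg_left h7 ?_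
          exact Finset.sum_nonneg fun d _ => Real.sqrt_nonneg _
      _ = (C * Real.sqrt (((m : ℝ) * ((A + A).card : ℝ)) * ((m : ℝ) * (A.card : ℝ))))
            * ∑ d ∈ D, Real.sqrt d := by ring
      _ = (m : ℝ) * ((A.card : ℝ) * Real.sqrt ((m : ℝ) * ((A * A).card : ℝ) * ((A + A).card : ℝ)))
            * ∑ d ∈ D, Real.sqrt d := by rw [hCZ]
  -- Conclusion
  have hfinal : (A.card : ℝ) ^ 3
      ≤ (m : ℝ)⁻¹ * ((A.card : ℝ) * ((A * A).card : ℝ) * ((A + A).card : ℝ) * (A.card : ℝ)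
        + (m : ℝ) * ((A.card : ℝ) * Real.sqrt ((m : ℝ) * ((A * A).card : ℝ) * ((A + A).card : ℝ)))
          * ∑ d ∈ D, Real.sqrt d) := by
    refine le_trans h1 (le_trans h2 ?_)
    rw [h3, h4]
    refine mul_le_mul_of_nonneg_left ?_ (by positivity)
    exact add_le_add_right herr _
  calc (A.card : ℝ) ^ 3 ≤ _ := hfinal
    _ = ((A * A).card : ℝ) * (A.card : ℝ) ^ 2 * ((A + A).card : ℝ) / m +
        (A.card : ℝ) * Real.sqrt ((m : ℝ) * (A * A).card * (A + A).card) *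
          ∑ d ∈ D, Real.sqrt d := by
      field_simp
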